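/- Fix positive integers M and K, complex column vectors h_1,…,h_K ∈ ℂ^M, a real constant c > 0, and target rates r_1,…,r_K > 0. Let i_1,…,i_K be a permutation of {1,…,K} and m ≤ K such that the SIC decodability condition holds for the first m users: r_{i_u} ≤ R_{i_u}^{T_u} for every u ≤ m, where T_u = {i_{u+1},…,i_K}. Let D = {i_1,…,i_m} and Ŝ = {1,…,K} ∖ D. Then D satisfies the joint-decodability (capacity-region) condition relative to the outage set Ŝ: for every subset S ⊆ D, Σ_{k∈S} r_k ≤ R_S^{Ŝ}. In particular, any set of users decodable by successive interference cancellation in some order lies in the capacity region of the corresponding multiple-access channel with the remaining users treated as interference. -/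

import Mathlib

open Matrix BigOperators

/-- `gram h T = ∑ k ∈ T, h k (h k)^H`, the Gram (interference covariance) matrix of the
channel vectors of the users in `T`. -/
noncomputable def gram {M K : ℕ} (h : Fin K → Fin M → ℂ)
    (T : Finset (Fin K)) : Matrix (Fin M) (Fin M) ℂ :=
  ∑ k ∈ T, Matrix.vecMulVec (h k) (star (h k))

/-- Achievable (sum) rate of the user group `S` under interference from the user group `T`:
`R_S^T = log₂ (det (I + c (G_S + G_T)) / det (I + c G_T))`, both determinants being
positive reals (as determinants of `I` plus a positive semidefinite Hermitian matrix). -/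
noncomputable def rate {M K : ℕ} (h : Fin K → Fin M → ℂ) (c : ℝ)
    (S T : Finset (Fin K)) : ℝ :=
  Real.logb 2
    (((1 + (c : ℂ) • (gram h S + gram h T)).det).re /
      ((1 + (c : ℂ) • gram h T).det).re)

/-!
Chain rule: for pairwise disjoint groups, `R_{S ∪ S'}^T = R_S^{S' ∪ T} + R_{S'}^T`, since the
determinant ratios telescope. For a single user the matrix determinant lemma gives
`R_k^T = log₂ (1 + c h_kᴴ (I + c G_T)⁻¹ h_k)`, which is antitone in `T` because inversion reverses
the Loewner order. Peeling the users of `S ⊆ D` off in decoding order, the first one, `k`,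
contributes `R_k^{T'}` where `T'` (the rest of `S` together with `Ŝ`) consists of users decoded
after `k`; hence `R_k^{T'} ≥ R_k^{T_u} ≥ r_k`.
-/

open scoped ComplexOrder

namespace Matrix

variable {n : Type*} [Fintype n] [DecidableEq n]

theorem det_add_vecMulVec {R : Type*} [CommRing R] {A : Matrix n n R} (hA : IsUnit A.det)
    (u v : n → R) : (A + vecMulVec u v).det = A.det * (1 + v ⬝ᵥ A⁻¹ *ᵥ u) := by
  rw [vecMulVec_eq Unit, det_add_replicateCol_mul_replicateRow hA, Matrix.mul_assoc,
    ← replicateCol_mulVec]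
  simp [replicateRow_mul_replicateCol_apply]

theorem PosDef.re_dotProduct_inv_mulVec_le {𝕜 : Type*} [RCLike 𝕜] {A B : Matrix n n 𝕜}
    (hA : A.PosDef) (hAB : (B - A).PosSemidef) (x : n → 𝕜) :
    RCLike.re (star x ⬝ᵥ B⁻¹ *ᵥ x) ≤ RCLike.re (star x ⬝ᵥ A⁻¹ *ᵥ x) := by
  have hB : B.PosDef := by simpa using hA.add_posSemidef hAB
  set u := A⁻¹ *ᵥ x
  set y := B⁻¹ *ᵥ x
  have hAu : A *ᵥ u = x := by
    rw [mulVec_mulVec, mul_nonsing_inv _ ((isUnit_iff_isUnit_det A).mp hA.isUnit), one_mulVec]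
  have hBy : B *ᵥ y = x := by
    rw [mulVec_mulVec, mul_nonsing_inv _ ((isUnit_iff_isUnit_det B).mp hB.isUnit), one_mulVec]
  have hx : ∀ w, star x ⬝ᵥ w = star u ⬝ᵥ A *ᵥ w := fun w => by
    rw [← hAu, star_mulVec, hA.isHermitian.eq, dotProduct_mulVec]
  have key : star x ⬝ᵥ u - star x ⬝ᵥ y
      = star (u - y) ⬝ᵥ A *ᵥ (u - y) + star y ⬝ᵥ (B - A) *ᵥ y := by
    rw [hx u, hx y]
    simp only [star_sub, sub_dotProduct, dotProduct_sub, mulVec_sub, sub_mulVec, hAu, hBy]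
    ring
  have := congrArg RCLike.re key
  simp only [map_sub, map_add] at this
  linarith [hA.posSemidef.re_dotProduct_nonneg (u - y), hAB.re_dotProduct_nonneg y]

end Matrix

section

variable {M K : ℕ} (h : Fin K → Fin M → ℂ) {c : ℝ}

theorem gram_posSemidef (T : Finset (Fin K)) : (gram h T).PosSemidef :=
  Finset.sum_induction _ _ (fun _ _ => PosSemidef.add) PosSemidef.zero
    fun k _ => posSemidef_vecMulVec_self_star (h k)

theorem gram_union {S T : Finset (Fin K)} (hST : Disjoint S T) :
    gram h (S ∪ T) = gram h S + gram h T :=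
  Finset.sum_union hST

theorem posDef_one_add_smul_gram (hc : 0 ≤ c) (T : Finset (Fin K)) :
    (1 + (c : ℂ) • gram h T).PosDef :=
  PosDef.one.add_posSemidef ((gram_posSemidef h T).smul (Complex.zero_le_real.mpr hc))

theorem re_det_one_add_smul_gram_pos (hc : 0 ≤ c) (T : Finset (Fin K)) :
    0 < (1 + (c : ℂ) • gram h T).det.re :=
  (Complex.lt_def.mp (posDef_one_add_smul_gram h hc T).det_pos).1

theorem rate_eq_logb_sub (hc : 0 ≤ c) {S T : Finset (Fin K)} (hST : Disjoint S T) :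
    rate h c S T = Real.logb 2 (1 + (c : ℂ) • gram h (S ∪ T)).det.re
      - Real.logb 2 (1 + (c : ℂ) • gram h T).det.re := by
  rw [rate, ← gram_union h hST, Real.logb_div (re_det_one_add_smul_gram_pos h hc _).ne'
    (re_det_one_add_smul_gram_pos h hc _).ne']

theorem rate_union (hc : 0 ≤ c) {S S' T : Finset (Fin K)} (hSS' : Disjoint S S')
    (hST : Disjoint S T) (hS'T : Disjoint S' T) :
    rate h c (S ∪ S') T = rate h c S (S' ∪ T) + rate h c S' T := by
  rw [rate_eq_logb_sub h hc (Finset.disjoint_union_left.mpr ⟨hST, hS'T⟩),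
    rate_eq_logb_sub h hc (Finset.disjoint_union_right.mpr ⟨hSS', hST⟩),
    rate_eq_logb_sub h hc hS'T, Finset.union_assoc]
  ring

theorem rate_singleton_eq (hc : 0 ≤ c) (k : Fin K) (T : Finset (Fin K)) :
    rate h c {k} T = Real.logb 2
      (1 + c * (star (h k) ⬝ᵥ (1 + (c : ℂ) • gram h T)⁻¹ *ᵥ h k).re) := by
  have hP := posDef_one_add_smul_gram h hc T
  obtain ⟨hre, him⟩ := Complex.lt_def.mp hP.det_pos
  have hk : (c : ℂ) • gram h {k} = vecMulVec ((c : ℂ) • h k) (star (h k)) := by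
    rw [_root_.gram, Finset.sum_singleton, smul_vecMulVec]
  rw [rate, smul_add, add_comm (_ • gram h {k}), ← add_assoc, hk,
    det_add_vecMulVec ((isUnit_iff_isUnit_det _).mp hP.isUnit), mulVec_smul, dotProduct_smul]
  congr 1
  rw [Complex.mul_re, ← him, Complex.zero_im, zero_mul, sub_zero, mul_div_cancel_left₀ _ hre.ne']
  simp

theorem rate_singleton_antitone (hc : 0 ≤ c) (k : Fin K) : Antitone (rate h c {k}) := by
  intro T T' hTT'
  have hP := posDef_one_add_smul_gram h hc T
  have hgap : ((1 + (c : ℂ) • gram h T') - (1 + (c : ℂ) • gram h T)).PosSemidef := by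
    rw [← Finset.union_sdiff_of_subset hTT', gram_union h Finset.disjoint_sdiff]
    simpa using (gram_posSemidef h (T' \ T)).smul (Complex.zero_le_real.mpr hc)
  rw [rate_singleton_eq h hc, rate_singleton_eq h hc]
  have hq := (posDef_one_add_smul_gram h hc T').inv.posSemidef.re_dotProduct_nonneg (h k)
  refine Real.logb_le_logb_of_le one_lt_two (by positivity) ?_
  gcongr 1 + c * ?_
  exact hP.re_dotProduct_inv_mulVec_le hgap (h k)

theorem sum_le_rate_image_of_forall_le_rate_Ioi (hc : 0 ≤ c) (r : Fin K → ℝ)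
    (e : Equiv.Perm (Fin K)) {V W : Finset (Fin K)} (hW : ∀ u ∈ V, e u ∉ W ∧ W ⊆ (Finset.Ioi u).image e)
    (hdec : ∀ u ∈ V, r (e u) ≤ rate h c {e u} ((Finset.Ioi u).image e)) :
    ∑ k ∈ V.image e, r k ≤ rate h c (V.image e) W := by
  induction V using Finset.induction_on_min with
  | empty => simp [rate_eq_logb_sub h hc (Finset.disjoint_empty_left W)]
  | insert a V hmin ih =>
    have haV : a ∉ V := fun ha => (hmin a ha).false
    have heaV : e a ∉ V.image e := by simpa using haV
    have hVW : Disjoint (V.image e) W := Finset.disjoint_left.mpr <| by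
      simpa using fun u hu => (hW u (Finset.mem_insert_of_mem hu)).1
    have hlater : V.image e ∪ W ⊆ (Finset.Ioi a).image e :=
      Finset.union_subset (Finset.image_subset_image fun u hu => Finset.mem_Ioi.mpr (hmin u hu))
        (hW a (Finset.mem_insert_self a V)).2
    rw [Finset.image_insert, Finset.sum_insert heaV, Finset.insert_eq,
      rate_union h hc (Finset.disjoint_singleton_left.mpr heaV)
        (Finset.disjoint_singleton_left.mpr (hW a (Finset.mem_insert_self a V)).1) hVW]
    gcongr
    · exact (hdec a (Finset.mem_insert_self a V)).trans
        (rate_singleton_antitone h hc (e a) hlater)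
    · exact ih (fun u hu => hW u (Finset.mem_insert_of_mem hu))
        (fun u hu => hdec u (Finset.mem_insert_of_mem hu))

end

theorem Equiv.Perm.sdiff_image_filter_lt_subset_image_Ioi {K : ℕ} (e : Equiv.Perm (Fin K))
    {m : ℕ} {u : Fin K} (hu : (u : ℕ) < m) :
    Finset.univ \ (Finset.univ.filter (fun v : Fin K => (v : ℕ) < m)).image e ⊆
      (Finset.Ioi u).image e := by
  intro x hx
  simp only [Finset.mem_sdiff, Finset.mem_univ, Finset.mem_image, Finset.mem_filter, true_and,
    not_exists, not_and] at hx
  refine Finset.mem_image.mpr ⟨e.symm x, Finset.mem_Ioi.mpr ?_, e.apply_symm_apply x⟩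
  by_contra! hle
  exact hx _ ((Fin.le_iff_val_le_val.mp hle).trans_lt hu) (e.apply_symm_apply x)

theorem stmt_10_general {M K : ℕ} (h : Fin K → Fin M → ℂ)
    (c : ℝ) (hc : 0 < c) (r : Fin K → ℝ)
    (e : Equiv.Perm (Fin K)) (m : ℕ)
    (hdec : ∀ u : Fin K, (u : ℕ) < m →
      r (e u) ≤ rate h c {e u} ((Finset.Ioi u).image e)) :
    ∀ S ⊆ (Finset.univ.filter (fun u : Fin K => (u : ℕ) < m)).image e,
      ∑ k ∈ S, r k ≤
        rate h c S
          (Finset.univ \ (Finset.univ.filter (fun u : Fin K => (u : ℕ) < m)).image e) := by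
  intro S hS
  have hV : (Finset.univ.filter (fun u => e u ∈ S)).image e = S := by
    ext x
    simpa using ⟨fun ⟨u, hu, hux⟩ => hux ▸ hu, fun hx => ⟨e.symm x, by simpa using hx⟩⟩
  have hdecoded : ∀ u ∈ Finset.univ.filter (fun u => e u ∈ S), (u : ℕ) < m := fun u hu => by
    simpa using hS (Finset.mem_filter.mp hu).2
  rw [← hV]
  refine sum_le_rate_image_of_forall_le_rate_Ioi h hc.le r e (fun u hu => ⟨?_, ?_⟩)
    (fun u hu => hdec u (hdecoded u hu))
  · exact Finset.notMem_sdiff_of_mem_right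
      (Finset.mem_image_of_mem e (by simpa using hdecoded u hu))
  · exact e.sdiff_image_filter_lt_subset_image_Ioi (hdecoded u hu)

/-- Any set of users decodable by successive interference cancellation in some order lies in
the capacity region of the corresponding multiple-access channel with the remaining users
treated as interference: if, for a decoding order `e`, the SIC decodability condition
`r (e u) ≤ R_{e u}^{T_u}` (with `T_u = {e v : v > u}`) holds for all positions `u < m`, then
the decoded set `D = {e u : u < m}` satisfies condition (9) relative to the outage set
`Ŝ = univ ∖ D`: for every `S ⊆ D`, `∑_{k ∈ S} r k ≤ R_S^{Ŝ}`. -/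
theorem stmt_10 {M K : ℕ} (hM : 0 < M) (hK : 0 < K) (h : Fin K → Fin M → ℂ)
    (c : ℝ) (hc : 0 < c) (r : Fin K → ℝ) (hr : ∀ k, 0 < r k)
    (e : Equiv.Perm (Fin K)) (m : ℕ) (hm : m ≤ K)
    (hdec : ∀ u : Fin K, (u : ℕ) < m →
      r (e u) ≤ rate h c {e u} ((Finset.Ioi u).image e)) :
    ∀ S ⊆ (Finset.univ.filter (fun u : Fin K => (u : ℕ) < m)).image e,
      ∑ k ∈ S, r k ≤
        rate h c S
          (Finset.univ \ (Finset.univ.filter (fun u : Fin K => (u : ℕ) < m)).image e) :=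
  stmt_10_general h c hc r e m hdec
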